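/- Assume the form [·,·] is indefinite. Let x ∈ H be a nonzero non-neutral element ([x, x] ≠ 0) and let α ∈ ℂ. Then for every real ε with ε > |[x, x]|^{1/2} · |1 − |α||, there exists a fundamental symmetry J of (H, [·,·]) such that |‖x‖_J − ‖α • x‖_J| < ε. -/

import Mathlib

/-!
If `[x, x] > 0`, some fundamental symmetry fixes `x`. Indeed `J₀` fixes `q = x + J₀ x`, a
negative multiple `w` of `q` has `[w, w] = [x, x]`, and the `[·,·]`-reflection in the
non-neutral vector `x - w` is a `[·,·]`-isometric involution exchanging `w` and `x`;
conjugating `J₀` by it gives a fundamental symmetry `J` with `J x = x`, so that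
`‖x‖_J = [x, x] ^ (1/2)`. Since always `‖α • x‖_J = |α| ‖x‖_J`, the difference of the two
`J`-norms is `[x, x] ^ (1/2) |1 - |α||`. The case `[x, x] < 0` is the previous one for `-J₀`.
-/

open scoped ComplexOrder

/-- The indefinite (Krein) inner product `[x, y] := ⟪J₀ x, y⟫` induced by the
continuous linear involution `J₀`. -/
noncomputable def kform {H : Type*} [NormedAddCommGroup H] [InnerProductSpace ℂ H]
    (J₀ : H →L[ℂ] H) (x y : H) : ℂ :=
  inner ℂ (J₀ x) y

/-- `J` is a fundamental symmetry of the Krein space `(H, [·,·])`: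
a continuous linear involution, `[·,·]`-selfadjoint, with `[J x, x] > 0` for `x ≠ 0`. -/
def IsFundamentalSymmetry {H : Type*} [NormedAddCommGroup H] [InnerProductSpace ℂ H]
    (J₀ : H →L[ℂ] H) (J : H →L[ℂ] H) : Prop :=
  (∀ x, J (J x) = x) ∧
  (∀ x y, kform J₀ (J x) y = kform J₀ x (J y)) ∧
  (∀ x, x ≠ 0 → 0 < kform J₀ (J x) x)

/-- The `J`-norm `‖x‖_J := [J x, x] ^ (1/2)`. -/
noncomputable def jnorm {H : Type*} [NormedAddCommGroup H] [InnerProductSpace ℂ H]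
    (J₀ : H →L[ℂ] H) (J : H →L[ℂ] H) (x : H) : ℝ :=
  Real.sqrt (kform J₀ (J x) x).re

open ComplexConjugate

section

variable {H : Type*} [NormedAddCommGroup H] [InnerProductSpace ℂ H] {J₀ J : H →L[ℂ] H}

@[simp] lemma kform_smul_left (J₀ : H →L[ℂ] H) (a : ℂ) (x y : H) :
    kform J₀ (a • x) y = conj a * kform J₀ x y := by
  rw [kform, kform, map_smul, inner_smul_left]

@[simp] lemma kform_smul_right (J₀ : H →L[ℂ] H) (a : ℂ) (x y : H) :
    kform J₀ x (a • y) = a * kform J₀ x y := by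
  rw [kform, kform, inner_smul_right]

@[simp] lemma kform_sub_left (J₀ : H →L[ℂ] H) (x y z : H) :
    kform J₀ (x - y) z = kform J₀ x z - kform J₀ y z := by
  rw [kform, kform, kform, map_sub, inner_sub_left]

@[simp] lemma kform_sub_right (J₀ : H →L[ℂ] H) (x y z : H) :
    kform J₀ x (y - z) = kform J₀ x y - kform J₀ x z := by
  rw [kform, kform, kform, inner_sub_right]

lemma kform_neg (J₀ : H →L[ℂ] H) (x y : H) : kform (-J₀) x y = -kform J₀ x y := by
  simp [kform]

lemma conj_kform (hsa : ∀ x y : H, (inner ℂ (J₀ x) y : ℂ) = inner ℂ x (J₀ y)) (x y : H) :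
    conj (kform J₀ x y) = kform J₀ y x := by
  rw [kform, kform, inner_conj_symm, hsa]

lemma isFundamentalSymmetry_neg_iff :
    IsFundamentalSymmetry (-J₀) J ↔ IsFundamentalSymmetry J₀ (-J) := by
  simp [IsFundamentalSymmetry, kform]

lemma jnorm_neg (x : H) : jnorm J₀ (-J) x = jnorm (-J₀) J x := by
  simp [jnorm, kform]

lemma jnorm_smul (α : ℂ) (x : H) : jnorm J₀ J (α • x) = ‖α‖ * jnorm J₀ J x := by
  have hα : kform J₀ (α • J x) (α • x) = (‖α‖ ^ 2 : ℝ) * kform J₀ (J x) x := by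
    rw [kform_smul_left, kform_smul_right, ← mul_assoc, Complex.conj_mul']
    norm_cast
  rw [jnorm, jnorm, map_smul, hα, Complex.re_ofReal_mul, Real.sqrt_mul (by positivity),
    Real.sqrt_sq (norm_nonneg α)]

lemma isFundamentalSymmetry_self (hinv : ∀ x, J₀ (J₀ x) = x)
    (hsa : ∀ x y : H, (inner ℂ (J₀ x) y : ℂ) = inner ℂ x (J₀ y)) :
    IsFundamentalSymmetry J₀ J₀ := by
  refine ⟨hinv, fun x y => by rw [kform, kform, hinv, hsa, hinv], fun x hx => ?_⟩
  rw [kform, hinv, inner_self_eq_norm_sq_to_K, ← RCLike.ofReal_pow,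
    RCLike.ofReal_eq_complex_ofReal, Complex.zero_lt_real]
  exact pow_pos (norm_pos_iff.mpr hx) 2

lemma IsFundamentalSymmetry.conj (hJ : IsFundamentalSymmetry J₀ J) (U : H ≃L[ℂ] H)
    (hU : ∀ y z, kform J₀ (U y) (U z) = kform J₀ y z) :
    IsFundamentalSymmetry J₀ ((U : H →L[ℂ] H) ∘L J ∘L (U.symm : H →L[ℂ] H)) := by
  obtain ⟨hinv, hsymm, hpos⟩ := hJ
  refine ⟨fun y => ?_, fun y z => ?_, fun y hy => ?_⟩
  · simp [hinv]
  · simpa [← hU (J (U.symm y)), ← hU (U.symm y)] using hsymm (U.symm y) (U.symm z)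
  · simpa [← hU (J (U.symm y))] using hpos (U.symm y) (by simpa using hy)

noncomputable def kreinReflection (J₀ : H →L[ℂ] H) (v : H) : H →L[ℂ] H :=
  ContinuousLinearMap.id ℂ H - (2 / kform J₀ v v) • (innerSL ℂ (J₀ v)).smulRight v

lemma kreinReflection_apply (v y : H) :
    kreinReflection J₀ v y = y - (2 * kform J₀ v y / kform J₀ v v) • v := by
  simp [kreinReflection, kform, smul_smul, div_mul_eq_mul_div]

lemma kform_kreinReflection_right (v y : H) (hv : kform J₀ v v ≠ 0) :
    kform J₀ v (kreinReflection J₀ v y) = -kform J₀ v y := by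
  rw [kreinReflection_apply, kform_sub_right, kform_smul_right]
  field_simp
  ring

lemma kreinReflection_kreinReflection (v y : H) (hv : kform J₀ v v ≠ 0) :
    kreinReflection J₀ v (kreinReflection J₀ v y) = y := by
  rw [kreinReflection_apply v (kreinReflection J₀ v y), kform_kreinReflection_right v y hv,
    kreinReflection_apply]
  simp [neg_div, neg_smul]

lemma kform_kreinReflection (hsa : ∀ x y : H, (inner ℂ (J₀ x) y : ℂ) = inner ℂ x (J₀ y))
    (v y z : H) (hv : kform J₀ v v ≠ 0) :
    kform J₀ (kreinReflection J₀ v y) (kreinReflection J₀ v z) = kform J₀ y z := by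
  rw [kreinReflection_apply, kreinReflection_apply]
  simp only [kform_sub_left, kform_sub_right, kform_smul_left, kform_smul_right, map_div₀,
    map_mul, map_ofNat, conj_kform hsa v v, ← conj_kform hsa v y]
  field_simp
  ring

noncomputable def kreinReflectionEquiv (J₀ : H →L[ℂ] H) (v : H) (hv : kform J₀ v v ≠ 0) :
    H ≃L[ℂ] H :=
  .equivOfInverse (kreinReflection J₀ v) (kreinReflection J₀ v)
    (kreinReflection_kreinReflection v · hv) (kreinReflection_kreinReflection v · hv)

lemma kreinReflection_sub_apply {x w : H} (hxx : kform J₀ x x = kform J₀ w w)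
    (hxw : kform J₀ x w = kform J₀ w x) (hv : kform J₀ (x - w) (x - w) ≠ 0) :
    kreinReflection J₀ (x - w) w = x := by
  have hcoef : 2 * kform J₀ (x - w) w / kform J₀ (x - w) (x - w) = -1 := by
    rw [div_eq_iff hv]
    simp only [kform_sub_left, kform_sub_right]
    linear_combination hxx + hxw
  rw [kreinReflection_apply, hcoef, neg_one_smul, sub_neg_eq_add, add_sub_cancel]

lemma exists_isFundamentalSymmetry_apply_eq_self_of_kform_eq (hinv : ∀ x, J₀ (J₀ x) = x)
    (hsa : ∀ x y : H, (inner ℂ (J₀ x) y : ℂ) = inner ℂ x (J₀ y)) {x w : H} (hw : J₀ w = w)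
    (hxx : kform J₀ x x = kform J₀ w w) (hxw : kform J₀ x w = kform J₀ w x)
    (hv : kform J₀ (x - w) (x - w) ≠ 0) :
    ∃ J : H →L[ℂ] H, IsFundamentalSymmetry J₀ J ∧ J x = x := by
  set U := kreinReflectionEquiv J₀ (x - w) hv
  have hUw : U w = x := kreinReflection_sub_apply hxx hxw hv
  refine ⟨(U : H →L[ℂ] H) ∘L J₀ ∘L (U.symm : H →L[ℂ] H),
    (isFundamentalSymmetry_self hinv hsa).conj U (kform_kreinReflection hsa _ · · hv), ?_⟩
  simp [← hUw, hw]

lemma kform_add_apply_left (hinv : ∀ x, J₀ (J₀ x) = x) (x : H) :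
    kform J₀ (x + J₀ x) x = inner ℂ x x + kform J₀ x x := by
  rw [kform, kform, map_add, hinv, inner_add_left, add_comm]

lemma kform_add_apply_right (hinv : ∀ x, J₀ (J₀ x) = x)
    (hsa : ∀ x y : H, (inner ℂ (J₀ x) y : ℂ) = inner ℂ x (J₀ y)) (x : H) :
    kform J₀ x (x + J₀ x) = inner ℂ x x + kform J₀ x x := by
  rw [kform, kform, inner_add_right, hsa x (J₀ x), hinv, add_comm]

lemma kform_add_apply_add_apply (hinv : ∀ x, J₀ (J₀ x) = x)
    (hsa : ∀ x y : H, (inner ℂ (J₀ x) y : ℂ) = inner ℂ x (J₀ y)) (x : H) :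
    kform J₀ (x + J₀ x) (x + J₀ x) = 2 * (inner ℂ x x + kform J₀ x x) := by
  have hJ : J₀ (x + J₀ x) = x + J₀ x := by rw [map_add, hinv, add_comm]
  have hq : kform J₀ (x + J₀ x) (x + J₀ x) = 2 * kform J₀ (x + J₀ x) x := by
    rw [kform, kform, inner_add_right, ← hsa, hinv, hJ]
    ring
  rw [hq, kform_add_apply_left hinv]

lemma exists_isFundamentalSymmetry_apply_eq_self (hinv : ∀ x, J₀ (J₀ x) = x)
    (hsa : ∀ x y : H, (inner ℂ (J₀ x) y : ℂ) = inner ℂ x (J₀ y)) {x : H}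
    (hx : 0 < kform J₀ x x) :
    ∃ J : H →L[ℂ] H, IsFundamentalSymmetry J₀ J ∧ J x = x := by
  obtain ⟨c, hc, hxc⟩ := RCLike.pos_iff_exists_ofReal.mp hx
  set b : ℝ := ‖x‖ ^ 2 + c
  have hb : 0 < b := by positivity
  have hxb : inner ℂ x x + kform J₀ x x = b := by
    rw [inner_self_eq_norm_sq_to_K, ← hxc]; simp [b]
  set q := x + J₀ x
  have hq : J₀ q = q := by rw [map_add, hinv, add_comm]
  have hxq : kform J₀ x q = b := by rw [kform_add_apply_right hinv hsa, hxb]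
  have hqx : kform J₀ q x = b := by rw [kform_add_apply_left hinv, hxb]
  have hqq : kform J₀ q q = 2 * b := by rw [kform_add_apply_add_apply hinv hsa, hxb]
  set r := √(c / (2 * b))
  have hr : (r : ℂ) ^ 2 * (2 * b) = c := by
    have : r ^ 2 * (2 * b) = c := by
      rw [Real.sq_sqrt (by positivity)]; field_simp
    exact_mod_cast this
  -- `r` makes `[w, w] = 2 r² b = c`, and the sign of `w = -r • q` makes
  -- `[x - w, x - w] = 2c + 2rb` nonzero.
  refine exists_isFundamentalSymmetry_apply_eq_self_of_kform_eq hinv hsa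
    (w := -(r : ℂ) • q) (by rw [map_smul, hq]) ?_ ?_ ?_
  · simp only [kform_smul_left, kform_smul_right, hqq, ← hxc, map_neg, Complex.conj_ofReal]
    linear_combination -hr
  · simp only [kform_smul_left, kform_smul_right, hxq, hqx, map_neg, Complex.conj_ofReal]
  · have hv : kform J₀ (x - -(r : ℂ) • q) (x - -(r : ℂ) • q) = ((2 * c + 2 * r * b : ℝ) : ℂ) := by
      simp only [kform_sub_left, kform_sub_right, kform_smul_left, kform_smul_right, hxq, hqx,
        hqq, ← hxc, map_neg, Complex.conj_ofReal]
      push_cast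
      linear_combination hr
    rw [hv, Complex.ofReal_ne_zero]
    positivity

lemma exists_isFundamentalSymmetry_jnorm_eq_of_pos (hinv : ∀ x, J₀ (J₀ x) = x)
    (hsa : ∀ x y : H, (inner ℂ (J₀ x) y : ℂ) = inner ℂ x (J₀ y)) {x : H}
    (hx : 0 < kform J₀ x x) :
    ∃ J : H →L[ℂ] H, IsFundamentalSymmetry J₀ J ∧ jnorm J₀ J x = √‖kform J₀ x x‖ := by
  obtain ⟨J, hJ, hJx⟩ := exists_isFundamentalSymmetry_apply_eq_self hinv hsa hx
  exact ⟨J, hJ, by rw [jnorm, hJx, Complex.re_eq_norm.mpr hx.le]⟩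

lemma exists_isFundamentalSymmetry_jnorm_eq (hinv : ∀ x, J₀ (J₀ x) = x)
    (hsa : ∀ x y : H, (inner ℂ (J₀ x) y : ℂ) = inner ℂ x (J₀ y)) {x : H}
    (hx : kform J₀ x x ≠ 0) :
    ∃ J : H →L[ℂ] H, IsFundamentalSymmetry J₀ J ∧ jnorm J₀ J x = √‖kform J₀ x x‖ := by
  obtain ⟨c, hc⟩ := Complex.conj_eq_iff_real.mp (conj_kform hsa x x)
  rcases (show c ≠ 0 from fun h => hx (by rw [hc, h, Complex.ofReal_zero])).lt_or_gt with
    hneg | hpos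
  · have hinv' : ∀ x, (-J₀) ((-J₀) x) = x := by simp [hinv]
    have hsa' : ∀ x y : H, (inner ℂ ((-J₀) x) y : ℂ) = inner ℂ x ((-J₀) y) := by simp [hsa]
    have hx' : 0 < kform (-J₀) x x := by
      rw [kform_neg, hc, ← Complex.ofReal_neg, Complex.zero_lt_real]; linarith
    obtain ⟨J, hJ, hJx⟩ := exists_isFundamentalSymmetry_jnorm_eq_of_pos hinv' hsa' hx'
    exact ⟨-J, isFundamentalSymmetry_neg_iff.mp hJ, by rw [jnorm_neg, hJx, kform_neg, norm_neg]⟩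
  · exact exists_isFundamentalSymmetry_jnorm_eq_of_pos hinv hsa
      (by rw [hc, Complex.zero_lt_real]; exact hpos)

end

theorem exists_fundamentalSymmetry_jnorm_sub_smul_lt_of_form_ne_zero_general
    {H : Type*} [NormedAddCommGroup H] [InnerProductSpace ℂ H]
    (J₀ : H →L[ℂ] H)
    (hinv : ∀ x, J₀ (J₀ x) = x)
    (hsa : ∀ x y : H, (inner ℂ (J₀ x) y : ℂ) = inner ℂ x (J₀ y))
    (x : H) (hx : kform J₀ x x ≠ 0) (α : ℂ)
    (ε : ℝ) (hε : Real.sqrt ‖kform J₀ x x‖ * |1 - ‖α‖| < ε) :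
    ∃ J : H →L[ℂ] H, IsFundamentalSymmetry J₀ J ∧
      |jnorm J₀ J x - jnorm J₀ J (α • x)| < ε := by
  obtain ⟨J, hJ, hJx⟩ := exists_isFundamentalSymmetry_jnorm_eq hinv hsa hx
  refine ⟨J, hJ, ?_⟩
  calc |jnorm J₀ J x - jnorm J₀ J (α • x)| = √‖kform J₀ x x‖ * |1 - ‖α‖| := by
        rw [jnorm_smul, hJx, ← one_sub_mul, abs_mul, abs_of_nonneg (Real.sqrt_nonneg _), mul_comm]
    _ < ε := hε

theorem exists_fundamentalSymmetry_jnorm_sub_smul_lt_of_form_ne_zero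
    {H : Type*} [NormedAddCommGroup H] [InnerProductSpace ℂ H] [CompleteSpace H]
    (J₀ : H →L[ℂ] H)
    (hinv : ∀ x, J₀ (J₀ x) = x)
    (hsa : ∀ x y : H, (inner ℂ (J₀ x) y : ℂ) = inner ℂ x (J₀ y))
    (hindef : ∃ u v : H, 0 < kform J₀ u u ∧ kform J₀ v v < 0)
    (x : H) (hx0 : x ≠ 0) (hx : kform J₀ x x ≠ 0) (α : ℂ)
    (ε : ℝ) (hε : Real.sqrt ‖kform J₀ x x‖ * |1 - ‖α‖| < ε) :
    ∃ J : H →L[ℂ] H, IsFundamentalSymmetry J₀ J ∧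
      |jnorm J₀ J x - jnorm J₀ J (α • x)| < ε :=
  exists_fundamentalSymmetry_jnorm_sub_smul_lt_of_form_ne_zero_general J₀ hinv hsa x hx α ε hε
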